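/- arXiv:1602.03448 — 9 statements merged into one kernel-verified Lean document; each statement's English description precedes it below -/
import Mathlib

section
/- Let a, b, c, d be integers with |a·d − b·c| = 2, and let (m1, p1), (m2, p2) ∈ ℤ² with m1 ≡ m2 (mod 2) and p1 ≡ p2 (mod 2). Then the lines ℓ1 = {(m1, p1) + t·(a, b) : t ∈ ℝ} and ℓ2 = {(m2, p2) + t·(c, d) : t ∈ ℝ} in ℝ² intersect in exactly one point, this point lies in ℤ², and in fact there exist integers s and t with (m1, p1) + s·(a, b) = (m2, p2) + t·(c, d). -/
/-!
Write `D = a d - b c`. Cramer's rule solves `m₁ + s a = m₂ + t c`, `p₁ + s b = p₂ + t d` with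
`s = (Δm d - Δp c) / D` and `t = (Δm b - Δp a) / D`, where `Δm = m₂ - m₁` and `Δp = p₂ - p₁`.
Since `|D| = 2` and both differences are even, these parameters are integers, so the common point
is a lattice point; and `D ≠ 0` makes the directions independent, so it is the only common point.
-/

lemma exists_param_eq_of_det_dvd {R : Type*} [CommRing R] {a b c d m₁ p₁ m₂ p₂ : R}
    (hm : a * d - b * c ∣ m₂ - m₁) (hp : a * d - b * c ∣ p₂ - p₁) :
    ∃ s t : R, (m₁ + s * a, p₁ + s * b) = (m₂ + t * c, p₂ + t * d) := by
  obtain ⟨u, hu⟩ := hm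
  obtain ⟨v, hv⟩ := hp
  refine ⟨u * d - v * c, u * b - v * a, ?_⟩
  rw [Prod.mk.injEq]
  constructor
  · linear_combination -hu
  · linear_combination -hv

lemma param_eq_of_det_ne_zero {R : Type*} [CommRing R] [IsDomain R]
    {a b c d x₁ y₁ x₂ y₂ s s' t t' : R}
    (hD : a * d - b * c ≠ 0) (h : (x₁ + s * a, y₁ + s * b) = (x₂ + t * c, y₂ + t * d))
    (h' : (x₁ + s' * a, y₁ + s' * b) = (x₂ + t' * c, y₂ + t' * d)) : s = s' := by
  simp only [Prod.mk.injEq] at h h'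
  have hzero : (s - s') * (a * d - b * c) = 0 := by
    linear_combination d * h.1 - d * h'.1 - c * h.2 + c * h'.2
  exact sub_eq_zero.1 ((mul_eq_zero.1 hzero).resolve_right hD)

/-- If `a,b,c,d` are integers with `|a*d - b*c| = 2` and the integer base
points are congruent coordinatewise modulo 2, then the two lines intersect in exactly one
point, that point is an integer point, and the intersection is realized by integer
parameter values. -/
theorem stmt_2 (a b c d m1 p1 m2 p2 : ℤ) (h : |a * d - b * c| = 2)
    (hm : m1 ≡ m2 [ZMOD 2]) (hp : p1 ≡ p2 [ZMOD 2]) :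
    (∃! p : ℝ × ℝ,
        (∃ t : ℝ, p = ((m1 : ℝ) + t * a, (p1 : ℝ) + t * b)) ∧
        (∃ t : ℝ, p = ((m2 : ℝ) + t * c, (p2 : ℝ) + t * d))) ∧
    (∀ p : ℝ × ℝ,
        ((∃ t : ℝ, p = ((m1 : ℝ) + t * a, (p1 : ℝ) + t * b)) ∧
         (∃ t : ℝ, p = ((m2 : ℝ) + t * c, (p2 : ℝ) + t * d))) →
        ∃ x y : ℤ, p = ((x : ℝ), (y : ℝ))) ∧
    (∃ s t : ℤ, ((m1 + s * a, p1 + s * b) : ℤ × ℤ) = (m2 + t * c, p2 + t * d)) := by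
  have hdvd {x y : ℤ} (hxy : x ≡ y [ZMOD 2]) : a * d - b * c ∣ y - x := by
    rw [← abs_dvd, h]
    exact hxy.dvd
  obtain ⟨s, t, hst⟩ := exists_param_eq_of_det_dvd (hdvd hm) (hdvd hp)
  have hstR : ((m1 : ℝ) + s * a, (p1 : ℝ) + s * b) = ((m2 : ℝ) + t * c, (p2 : ℝ) + t * d) := by
    simpa using congrArg (Prod.map (Int.cast : ℤ → ℝ) (Int.cast : ℤ → ℝ)) hst
  have hDR : (a : ℝ) * d - b * c ≠ 0 := by
    have hD : a * d - b * c ≠ 0 := fun h0 => by simp [h0] at h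
    exact_mod_cast hD
  have hunique : ∀ p : ℝ × ℝ,
      ((∃ t : ℝ, p = ((m1 : ℝ) + t * a, (p1 : ℝ) + t * b)) ∧
       (∃ t : ℝ, p = ((m2 : ℝ) + t * c, (p2 : ℝ) + t * d))) →
      p = ((m1 : ℝ) + s * a, (p1 : ℝ) + s * b) := by
    rintro p ⟨⟨x, rfl⟩, ⟨y, hy⟩⟩
    rw [param_eq_of_det_ne_zero hDR hy hstR]
  refine ⟨⟨_, ⟨⟨s, rfl⟩, ⟨t, hstR⟩⟩, hunique⟩, fun p hp => ⟨m1 + s * a, p1 + s * b, ?_⟩, s, t, hst⟩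
  rw [hunique p hp]
  push_cast
  rfl
end

section
/- Let a, b, c, d be integers with gcd(a, b) = 1, gcd(c, d) = 1 and a·d − b·c ≠ 0. Then the number of points of ℤ² of the form s·(a, b) + t·(c, d) with 0 < s < 1 and 0 < t < 1 (s, t real) equals |a·d − b·c| − 1. -/
/-!
Let `v = (a, b)`, `w = (c, d)`, `D = v × w`, and swap `v, w` if needed so that `D > 0`. By Cramer's
rule `p = s v + t w` has `s = (p × w) / D` and `t = (v × p) / D`, so the lattice points of the open
parallelogram are the `p` with `0 < p × w < D` and `0 < v × p < D`. As `w` is primitive, the fibres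
of `p ↦ p × w` are cosets of `ℤ w`, along which `v × p` moves in steps of `D`; so each value in
`(0, D)` has exactly one preimage with `v × p ∈ [0, D)`. There `v × p ≠ 0`: since `v` is primitive,
`v × p = 0` forces `p ∈ ℤ v`, and then `D ∣ p × w`. Hence the count is `D - 1`.
-/

open Set

namespace LatticeParallelogram

def cross (p q : ℤ × ℤ) : ℤ := p.1 * q.2 - p.2 * q.1

def openParallelogramPoints (v w : ℤ × ℤ) : Set (ℤ × ℤ) :=
  {p | ∃ s t : ℝ, 0 < s ∧ s < 1 ∧ 0 < t ∧ t < 1 ∧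
    (p.1 : ℝ) = s * v.1 + t * w.1 ∧ (p.2 : ℝ) = s * v.2 + t * w.2}

lemma openParallelogramPoints_comm (v w : ℤ × ℤ) :
    openParallelogramPoints v w = openParallelogramPoints w v := by
  ext p
  constructor <;>
  · rintro ⟨s, t, hs₀, hs₁, ht₀, ht₁, hx, hy⟩
    exact ⟨t, s, ht₀, ht₁, hs₀, hs₁, by linarith, by linarith⟩

lemma cross_anticomm (p q : ℤ × ℤ) : cross q p = -cross p q := by
  simp only [cross]; ring

lemma cross_add_smul_right (v p w : ℤ × ℤ) (k : ℤ) :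
    cross v (p + k • w) = cross v p + k * cross v w := by
  simp only [cross, Prod.fst_add, Prod.snd_add, Prod.smul_fst, Prod.smul_snd, smul_eq_mul]; ring

lemma cross_add_smul_left (p w : ℤ × ℤ) (k : ℤ) : cross (p + k • w) w = cross p w := by
  simp only [cross, Prod.fst_add, Prod.snd_add, Prod.smul_fst, Prod.smul_snd, smul_eq_mul]; ring

lemma cross_smul_left (k : ℤ) (v w : ℤ × ℤ) : cross (k • v) w = k * cross v w := by
  simp only [cross, Prod.smul_fst, Prod.smul_snd, smul_eq_mul]; ring

lemma exists_eq_smul_of_cross_eq_zero {p q : ℤ × ℤ} (hq : IsCoprime q.1 q.2)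
    (h : cross p q = 0) : ∃ k : ℤ, p = k • q := by
  obtain ⟨P, Q, hPQ⟩ := hq
  simp only [cross] at h
  refine ⟨P * p.1 + Q * p.2, Prod.ext ?_ ?_⟩ <;>
    simp only [Prod.smul_fst, Prod.smul_snd, smul_eq_mul]
  · linear_combination (-p.1) * hPQ + Q * h
  · linear_combination (-p.2) * hPQ - P * h

lemma mem_openParallelogramPoints_iff {v w p : ℤ × ℤ} (hD : 0 < cross v w) :
    p ∈ openParallelogramPoints v w ↔
      cross p w ∈ Ioo 0 (cross v w) ∧ cross v p ∈ Ioo 0 (cross v w) := by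
  have hD' : (0 : ℝ) < cross v w := by exact_mod_cast hD
  simp only [mem_Ioo]
  constructor
  · rintro ⟨s, t, hs₀, hs₁, ht₀, ht₁, hx, hy⟩
    have hu : (cross p w : ℝ) = s * cross v w := by
      push_cast [cross]; linear_combination (w.2 : ℝ) * hx - (w.1 : ℝ) * hy
    have ht : (cross v p : ℝ) = t * cross v w := by
      push_cast [cross]; linear_combination (v.1 : ℝ) * hy - (v.2 : ℝ) * hx
    rify
    rw [hu, ht]
    refine ⟨⟨?_, ?_⟩, ?_, ?_⟩ <;> nlinarith
  · rintro ⟨⟨hu₀, hu₁⟩, ht₀, ht₁⟩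
    refine ⟨cross p w / cross v w, cross v p / cross v w, ?_, ?_, ?_, ?_, ?_, ?_⟩
    · exact div_pos (by exact_mod_cast hu₀) hD'
    · exact (div_lt_one hD').2 (by exact_mod_cast hu₁)
    · exact div_pos (by exact_mod_cast ht₀) hD'
    · exact (div_lt_one hD').2 (by exact_mod_cast ht₁)
    all_goals field_simp; push_cast [cross]; ring

lemma exists_cross_eq {w : ℤ × ℤ} (hw : IsCoprime w.1 w.2) (u : ℤ) : ∃ p, cross p w = u := by
  obtain ⟨P, Q, hPQ⟩ := hw
  exact ⟨(u * Q, -(u * P)), by simp only [cross]; linear_combination u * hPQ⟩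

lemma exists_cross_eq_and_cross_mem_Ico {v w : ℤ × ℤ} (hw : IsCoprime w.1 w.2)
    (hD : 0 < cross v w) (u : ℤ) :
    ∃ p, cross p w = u ∧ cross v p ∈ Ico 0 (cross v w) := by
  obtain ⟨p, hp⟩ := exists_cross_eq hw u
  refine ⟨p + (-(cross v p / cross v w)) • w, by rw [cross_add_smul_left, hp], ?_⟩
  have hmod : cross v (p + (-(cross v p / cross v w)) • w) = cross v p % cross v w := by
    rw [cross_add_smul_right, Int.emod_def]; ring
  rw [hmod]
  exact ⟨Int.emod_nonneg _ hD.ne', Int.emod_lt_of_pos _ hD⟩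

lemma bijOn_cross_openParallelogramPoints {v w : ℤ × ℤ} (hv : IsCoprime v.1 v.2)
    (hw : IsCoprime w.1 w.2) (hD : 0 < cross v w) :
    BijOn (cross · w) (openParallelogramPoints v w) (Ioo 0 (cross v w)) := by
  set D := cross v w
  simp only [BijOn, MapsTo, InjOn, SurjOn, subset_def, mem_image,
    mem_openParallelogramPoints_iff hD, mem_Ioo]
  refine ⟨fun p hp ↦ hp.1, ?_, ?_⟩
  · rintro p ⟨-, hpt₀, hpt₁⟩ q ⟨-, hqt₀, hqt₁⟩ hpq
    obtain ⟨k, hk⟩ : ∃ k : ℤ, p - q = k • w :=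
      exists_eq_smul_of_cross_eq_zero hw <| by
        simp only [cross, Prod.fst_sub, Prod.snd_sub] at hpq ⊢; linarith
    obtain rfl := eq_add_of_sub_eq' hk
    rw [cross_add_smul_right] at hpt₀ hpt₁
    have hk0 : k * D = 0 := Int.eq_zero_of_abs_lt_dvd (dvd_mul_left D k)
      (by rw [abs_lt]; constructor <;> linarith)
    rw [(mul_eq_zero.1 hk0).resolve_right hD.ne', zero_smul, add_zero]
  · rintro u ⟨hu₀, hu₁⟩
    obtain ⟨p, hpu, hpt₀, hpt₁⟩ := exists_cross_eq_and_cross_mem_Ico hw hD u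
    refine ⟨p, ⟨⟨by rwa [hpu], by rwa [hpu]⟩, hpt₀.lt_of_ne' ?_, hpt₁⟩, hpu⟩
    intro h0
    obtain ⟨m, rfl⟩ := exists_eq_smul_of_cross_eq_zero hv (by rw [cross_anticomm, h0, neg_zero])
    rw [cross_smul_left] at hpu
    have hm0 : m * D = 0 := Int.eq_zero_of_abs_lt_dvd (dvd_mul_left D m)
      (by rw [hpu, abs_lt]; constructor <;> linarith)
    linarith

lemma ncard_openParallelogramPoints_of_pos {v w : ℤ × ℤ} (hv : IsCoprime v.1 v.2)
    (hw : IsCoprime w.1 w.2) (hD : 0 < cross v w) :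
    (openParallelogramPoints v w).ncard = (cross v w).natAbs - 1 := by
  rw [(bijOn_cross_openParallelogramPoints hv hw hD).ncard_eq, ← Finset.coe_Ioo,
    ncard_coe_finset, Int.card_Ioo]
  omega

lemma ncard_openParallelogramPoints {v w : ℤ × ℤ} (hv : IsCoprime v.1 v.2)
    (hw : IsCoprime w.1 w.2) (hD : cross v w ≠ 0) :
    (openParallelogramPoints v w).ncard = (cross v w).natAbs - 1 := by
  rcases hD.lt_or_gt with hneg | hpos
  · rw [openParallelogramPoints_comm, ← Int.natAbs_neg, ← cross_anticomm]
    exact ncard_openParallelogramPoints_of_pos hw hv (by rw [cross_anticomm]; omega)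
  · exact ncard_openParallelogramPoints_of_pos hv hw hpos

end LatticeParallelogram

open LatticeParallelogram in
/-- For coprime integer vectors `(a,b)` and `(c,d)` with `a*d - b*c ≠ 0`,
the number of integer points in the open parallelogram
`{s•(a,b) + t•(c,d) : 0 < s < 1, 0 < t < 1}` is `|a*d - b*c| - 1`. -/
theorem stmt_3 (a b c d : ℤ) (hab : Int.gcd a b = 1) (hcd : Int.gcd c d = 1)
    (h : a * d - b * c ≠ 0) :
    {p : ℤ × ℤ | ∃ s t : ℝ, 0 < s ∧ s < 1 ∧ 0 < t ∧ t < 1 ∧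
        (p.1 : ℝ) = s * a + t * c ∧ (p.2 : ℝ) = s * b + t * d}.ncard
      = (a * d - b * c).natAbs - 1 :=
  ncard_openParallelogramPoints (v := (a, b)) (w := (c, d))
    (Int.isCoprime_iff_gcd_eq_one.2 hab) (Int.isCoprime_iff_gcd_eq_one.2 hcd) h
end

section
/- Let a, b, c, d be integers with gcd(a, b) = 1, gcd(c, d) = 1 and a·d − b·c ≠ 0. Then the number of points of ℤ² of the form s·(2a, 2b) + t·(2c, 2d) with 0 < s < 1 and 0 < t < 1 (s, t real) equals 4·|a·d − b·c| − 3. -/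
/-!
Put `D = a d - b c > 0`. By Cramer's rule `p` lies in the open parallelogram iff
`0 < d p.1 - c p.2 < 2D` and `0 < a p.2 - b p.1 < 2D`. As `(a, b)` is primitive it extends to a
basis `(a, b), (-y, x)` of `ℤ²`, in which `(c, d)` has coordinates `(e, D)` with `e = c x + d y`
coprime to `D`. On the line `a p.2 - b p.1 = k` the lattice points are `j • (a, b) + k • (-y, x)`,
where `d p.1 - c p.2 = j D - k e`; so each of the `2D - 1` lines with `0 < k < 2D` carries two
points of the parallelogram, except that it carries one when `D ∣ k e`, i.e. when `k = D`.
This gives `2 (2D - 1) - 1 = 4D - 3` points.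
-/

open Finset

def parallelogramPoints (a b c d : ℤ) : Set (ℤ × ℤ) :=
  {p | ∃ s t : ℝ, 0 < s ∧ s < 1 ∧ 0 < t ∧ t < 1 ∧
    (p.1 : ℝ) = s * (2 * a) + t * (2 * c) ∧ (p.2 : ℝ) = s * (2 * b) + t * (2 * d)}

lemma parallelogramPoints_comm (a b c d : ℤ) :
    parallelogramPoints a b c d = parallelogramPoints c d a b := by
  ext p
  constructor <;>
  · rintro ⟨s, t, hs, hs', ht, ht', h1, h2⟩
    exact ⟨t, s, ht, ht', hs, hs', by rw [h1]; ring, by rw [h2]; ring⟩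

lemma mem_Ioo_zero_one_iff_of_cast_eq_mul {u D : ℤ} {s : ℝ} (hD : 0 < D) (h : (u : ℝ) = s * D) :
    s ∈ Set.Ioo 0 1 ↔ u ∈ Set.Ioo 0 D := by
  have hDR : (0 : ℝ) < D := Int.cast_pos.mpr hD
  rw [Set.mem_Ioo, Set.mem_Ioo, ← Int.cast_pos (R := ℝ), ← Int.cast_lt (R := ℝ), h,
    mul_pos_iff_of_pos_right hDR, mul_lt_iff_lt_one_left hDR]

lemma mem_parallelogramPoints_iff {a b c d : ℤ} (hD : 0 < a * d - b * c) (p : ℤ × ℤ) :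
    p ∈ parallelogramPoints a b c d ↔
      d * p.1 - c * p.2 ∈ Set.Ioo 0 (2 * (a * d - b * c)) ∧
      a * p.2 - b * p.1 ∈ Set.Ioo 0 (2 * (a * d - b * c)) := by
  have h2D : 0 < 2 * (a * d - b * c) := by positivity
  have h2DR : ((2 * (a * d - b * c) : ℤ) : ℝ) ≠ 0 := Int.cast_ne_zero.mpr h2D.ne'
  constructor
  · rintro ⟨s, t, hs, hs', ht, ht', h1, h2⟩
    refine ⟨(mem_Ioo_zero_one_iff_of_cast_eq_mul (s := s) h2D ?_).mp ⟨hs, hs'⟩,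
      (mem_Ioo_zero_one_iff_of_cast_eq_mul (s := t) h2D ?_).mp ⟨ht, ht'⟩⟩ <;>
    · push_cast; rw [h1, h2]; ring
  · rintro ⟨hu, hv⟩
    set u := d * p.1 - c * p.2 with hu_def
    set v := a * p.2 - b * p.1 with hv_def
    obtain ⟨hs, hs'⟩ := (mem_Ioo_zero_one_iff_of_cast_eq_mul (s := u / (2 * (a * d - b * c) : ℤ))
      h2D (div_mul_cancel₀ _ h2DR).symm).mpr hu
    obtain ⟨ht, ht'⟩ := (mem_Ioo_zero_one_iff_of_cast_eq_mul (s := v / (2 * (a * d - b * c) : ℤ))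
      h2D (div_mul_cancel₀ _ h2DR).symm).mpr hv
    refine ⟨_, _, hs, hs', ht, ht', ?_, ?_⟩ <;>
    · field_simp
      push_cast [hu_def, hv_def]
      ring

lemma Int.ediv_add_mul_sub_mem_Ioo_iff {D : ℤ} (hD : 0 < D) (m i : ℤ) :
    (m / D + i) * D - m ∈ Set.Ioo 0 (2 * D) ↔ i = 1 ∨ (i = 2 ∧ ¬ D ∣ m) := by
  have hr := Int.emod_nonneg m hD.ne'
  have hr' := Int.emod_lt_of_pos m hD
  have hshift : (m / D + i) * D - m = i * D - m % D := by
    linear_combination Int.ediv_mul_add_emod m D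
  rw [hshift, Int.dvd_iff_emod_eq_zero, Set.mem_Ioo]
  constructor
  · rintro ⟨h0, h2⟩
    have hi0 : 0 < i := pos_of_mul_pos_left (by omega) hD.le
    have hi3 : i < 3 := lt_of_mul_lt_mul_right (by omega : i * D < 3 * D) hD.le
    interval_cases i <;> omega
  · rintro (rfl | ⟨rfl, hm⟩) <;> omega

lemma dvd_mul_iff_eq_of_isCoprime {D e k : ℤ} (h : IsCoprime D e) (hk : k ∈ Set.Ioo 0 (2 * D)) :
    D ∣ k * e ↔ k = D := by
  refine ⟨fun hdvd => ?_, fun hkD => hkD ▸ dvd_mul_right D e⟩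
  obtain ⟨t, rfl⟩ := h.dvd_of_dvd_mul_right hdvd
  obtain ⟨hk0, hk2⟩ := hk
  have hD : 0 < D := by linarith
  have ht0 : 0 < t := pos_of_mul_pos_right hk0 hD.le
  have ht2 : t < 2 := lt_of_mul_lt_mul_left (by linarith : D * t < D * 2) hD.le
  obtain rfl : t = 1 := by omega
  exact mul_one D

/-- In the basis `(a, b), (-y, x)` of `ℤ²` the vector `(c, d)` has coordinates
`(c x + d y, a d - b c)`; a unimodular change of basis preserves primitivity. -/
lemma isCoprime_det_of_isCoprime {a b c d x y : ℤ} (hxy : x * a + y * b = 1)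
    (hcd : IsCoprime c d) : IsCoprime (a * d - b * c) (c * x + d * y) := by
  obtain ⟨u, v, huv⟩ := hcd
  exact ⟨x * v - y * u, a * u + b * v, by linear_combination (c * u + d * v) * hxy + huv⟩

def bezoutBasisEquiv {a b x y : ℤ} (hxy : x * a + y * b = 1) : ℤ × ℤ ≃ ℤ × ℤ where
  toFun q := (q.2 * a - q.1 * y, q.2 * b + q.1 * x)
  invFun p := (a * p.2 - b * p.1, x * p.1 + y * p.2)
  left_inv q := by
    ext
    · linear_combination q.1 * hxy
    · linear_combination q.2 * hxy
  right_inv p := by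
    ext
    · linear_combination p.1 * hxy
    · linear_combination p.2 * hxy

theorem ncard_parallelogramPoints_of_pos {a b c d : ℤ} (hab : IsCoprime a b)
    (hcd : IsCoprime c d) (hD : 0 < a * d - b * c) :
    (parallelogramPoints a b c d).ncard = 4 * (a * d - b * c).natAbs - 3 := by
  obtain ⟨x, y, hxy⟩ := hab
  have hcop := isCoprime_det_of_isCoprime hxy hcd
  set D := a * d - b * c
  set e := c * x + d * y
  let θ := (Equiv.prodShear (Equiv.refl ℤ) fun k => Equiv.addLeft (k * e / D)).trans
    (bezoutBasisEquiv hxy)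
  have hθ : θ ⁻¹' parallelogramPoints a b c d =
      ↑((Ioo 0 (2 * D) ×ˢ Icc (1 : ℤ) 2).erase (D, 2)) := by
    ext ⟨k, i⟩
    have hθ_apply : θ (k, i) =
        ((k * e / D + i) * a - k * y, (k * e / D + i) * b + k * x) := rfl
    have h1 : d * (θ (k, i)).1 - c * (θ (k, i)).2 = (k * e / D + i) * D - k * e := by
      rw [hθ_apply]; ring
    have h2 : a * (θ (k, i)).2 - b * (θ (k, i)).1 = k := by
      rw [hθ_apply]; linear_combination k * hxy
    rw [Set.mem_preimage, mem_parallelogramPoints_iff hD, h1, h2,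
      Int.ediv_add_mul_sub_mem_Ioo_iff hD]
    simp only [coe_erase, Set.mem_sdiff, Set.mem_singleton_iff, coe_product, Set.mem_prod,
      coe_Ioo, coe_Icc, Set.mem_Icc, Prod.mk.injEq]
    constructor
    · rintro ⟨hi, hk⟩
      rw [dvd_mul_iff_eq_of_isCoprime hcop hk] at hi
      rw [Set.mem_Ioo] at hk ⊢
      omega
    · rintro ⟨⟨hk, hi⟩, hne⟩
      rw [dvd_mul_iff_eq_of_isCoprime hcop hk]
      rw [Set.mem_Ioo] at hk ⊢
      omega
  rw [← θ.image_preimage (parallelogramPoints a b c d), hθ,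
    Set.ncard_image_of_injective _ θ.injective, Set.ncard_coe_finset,
    card_erase_of_mem (by simp only [mem_product, mem_Ioo, mem_Icc]; omega), card_product,
    Int.card_Ioo, Int.card_Icc, show ((2 : ℤ) + 1 - 1).toNat = 2 from rfl]
  omega

/-- For coprime integer vectors `(a,b)` and `(c,d)` with `a*d - b*c ≠ 0`,
the number of integer points in the open parallelogram spanned by `(2a,2b)` and `(2c,2d)`
is `4*|a*d - b*c| - 3`. -/
theorem stmt_4 (a b c d : ℤ) (hab : Int.gcd a b = 1) (hcd : Int.gcd c d = 1)
    (h : a * d - b * c ≠ 0) :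
    {p : ℤ × ℤ | ∃ s t : ℝ, 0 < s ∧ s < 1 ∧ 0 < t ∧ t < 1 ∧
        (p.1 : ℝ) = s * (2 * a) + t * (2 * c) ∧ (p.2 : ℝ) = s * (2 * b) + t * (2 * d)}.ncard
      = 4 * (a * d - b * c).natAbs - 3 := by
  wlog hD : 0 < a * d - b * c generalizing a b c d
  · have hD' : 0 < c * b - d * a := by
      linarith [lt_of_le_of_ne (not_lt.mp hD) h]
    calc _ = (parallelogramPoints c d a b).ncard := by rw [← parallelogramPoints_comm]; rfl
      _ = 4 * (c * b - d * a).natAbs - 3 := this c d a b hcd hab hD'.ne' hD'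
      _ = _ := by rw [show c * b - d * a = -(a * d - b * c) by ring, Int.natAbs_neg]
  exact ncard_parallelogramPoints_of_pos (Int.isCoprime_iff_gcd_eq_one.mpr hab)
    (Int.isCoprime_iff_gcd_eq_one.mpr hcd) hD
end

section
/- Let M be a finite set of rational numbers and let f ∈ M. Then there exist rational numbers x and y with x < y < f such that, writing f = f2/f1, x = x2/x1, y = y2/y1 in lowest terms with positive denominators f1, x1, y1, one has |x1·y2 − x2·y1| = 1, |x1·f2 − x2·f1| = 1, and |y1·f2 − y2·f1| = 1, and moreover there is no q ∈ M with x ≤ q < f. -/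
/-!
Write `f = a / b`. By Bézout there are `P / Q` with `a Q - b P = 1` and `Q` as large as we
like. Then `x = P / Q`, the mediant `y = (P + a) / (Q + b)` and `f` are pairwise Farey
neighbours, and `f - x = 1 / (b Q)` can be made smaller than the gap between `f` and the
largest element of `M` below `f`.
-/

namespace Rat

def fareyDet (x y : ℚ) : ℤ := x.den * y.num - x.num * y.den

theorem sub_eq_fareyDet_div (x y : ℚ) : y - x = fareyDet x y / (x.den * y.den) := by
  rw [eq_div_iff (by positivity), fareyDet]
  push_cast
  nth_rewrite 1 [← num_div_den x, ← num_div_den y]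
  field_simp

theorem lt_of_fareyDet_eq_one {x y : ℚ} (h : fareyDet x y = 1) : x < y := by
  have : 0 < y - x := by rw [sub_eq_fareyDet_div, h]; positivity
  linarith

theorem num_div_of_isCoprime {P Q : ℤ} (hQ : 0 < Q) (h : IsCoprime P Q) :
    (P / Q : ℚ).num = P :=
  num_div_eq_of_coprime hQ (Int.isCoprime_iff_gcd_eq_one.mp h)

theorem den_div_of_isCoprime {P Q : ℤ} (hQ : 0 < Q) (h : IsCoprime P Q) :
    ((P / Q : ℚ).den : ℤ) = Q :=
  den_div_eq_of_coprime hQ (Int.isCoprime_iff_gcd_eq_one.mp h)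

theorem fareyDet_div_of_isCoprime {P Q : ℤ} (hQ : 0 < Q) (h : IsCoprime P Q) (y : ℚ) :
    fareyDet (P / Q) y = Q * y.num - P * y.den := by
  rw [fareyDet, den_div_of_isCoprime hQ h, num_div_of_isCoprime hQ h]

theorem div_fareyDet_of_isCoprime {P Q : ℤ} (hQ : 0 < Q) (h : IsCoprime P Q) (x : ℚ) :
    fareyDet x (P / Q) = x.den * P - x.num * Q := by
  rw [fareyDet, den_div_of_isCoprime hQ h, num_div_of_isCoprime hQ h]

theorem exists_num_mul_sub_den_mul_eq_one (f : ℚ) (N : ℤ) :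
    ∃ P Q : ℤ, N ≤ Q ∧ f.num * Q - f.den * P = 1 := by
  obtain ⟨s, t, hst⟩ := isCoprime_num_den f
  have hden : (1 : ℤ) ≤ f.den := by exact_mod_cast f.pos
  refine ⟨-t + (|N| + |s|) * f.num, s + (|N| + |s|) * f.den, ?_, by linear_combination hst⟩
  nlinarith [le_abs_self N, neg_abs_le s, abs_nonneg N, abs_nonneg s]

theorem exists_fareyDet_eq_one_of_sub_lt (f : ℚ) {ε : ℚ} (hε : 0 < ε) :
    ∃ x y : ℚ, fareyDet x y = 1 ∧ fareyDet x f = 1 ∧ fareyDet y f = 1 ∧ f - x < ε := by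
  obtain ⟨N, hN⟩ := exists_int_gt ε⁻¹
  obtain ⟨P, Q, hNQ, hdet⟩ := exists_num_mul_sub_den_mul_eq_one f N
  have hN0 : (0 : ℚ) < N := (inv_pos.mpr hε).trans hN
  have hQ : 0 < Q := lt_of_lt_of_le (by exact_mod_cast hN0) hNQ
  have hden : (0 : ℤ) < f.den := by exact_mod_cast f.pos
  have hPQ : IsCoprime P Q := ⟨-f.den, f.num, by linear_combination hdet⟩
  have hPQ' : IsCoprime (P + f.num) (Q + f.den) := ⟨-f.den, f.num, by linear_combination hdet⟩
  have hxf : fareyDet (P / Q) f = 1 := by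
    rw [fareyDet_div_of_isCoprime hQ hPQ]; linear_combination hdet
  refine ⟨P / Q, ((P + f.num : ℤ) : ℚ) / (Q + f.den : ℤ), ?_, hxf, ?_, ?_⟩
  · rw [div_fareyDet_of_isCoprime (by omega) hPQ', den_div_of_isCoprime hQ hPQ,
      num_div_of_isCoprime hQ hPQ]
    linear_combination hdet
  · rw [fareyDet_div_of_isCoprime (by omega) hPQ']; linear_combination hdet
  · have hxden : ((P / Q : ℚ).den : ℚ) = Q := by exact_mod_cast den_div_of_isCoprime hQ hPQ
    have hfden : (1 : ℚ) ≤ f.den := by exact_mod_cast f.pos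
    have hNQ' : (N : ℚ) ≤ Q := by exact_mod_cast hNQ
    rw [sub_eq_fareyDet_div, hxf, hxden, Int.cast_one, one_div, inv_lt_comm₀ (by positivity) hε]
    nlinarith

end Rat

theorem Finset.exists_lt_forall_lt_imp_le {α : Type*} [LinearOrder α] [NoMinOrder α]
    (s : Finset α) (a : α) : ∃ c < a, ∀ q ∈ s, q < a → q ≤ c := by
  classical
  obtain ⟨b, hb⟩ := exists_lt a
  let t := insert b (s.filter (· < a))
  refine ⟨t.max' (insert_nonempty _ _), (max'_lt_iff _ _).mpr ?_, fun q hq hqa => ?_⟩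
  · simp only [t, mem_insert, mem_filter]
    rintro y (rfl | ⟨-, hy⟩) <;> assumption
  · exact le_max' t q (mem_insert_of_mem (mem_filter.mpr ⟨hq, hqa⟩))

theorem stmt_6_general (M : Finset ℚ) (f : ℚ) :
    ∃ x y : ℚ, x < y ∧ y < f ∧
      |(x.den : ℤ) * y.num - x.num * (y.den : ℤ)| = 1 ∧
      |(x.den : ℤ) * f.num - x.num * (f.den : ℤ)| = 1 ∧
      |(y.den : ℤ) * f.num - y.num * (f.den : ℤ)| = 1 ∧
      ∀ q ∈ M, ¬(x ≤ q ∧ q < f) := by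
  obtain ⟨c, hcf, hc⟩ := M.exists_lt_forall_lt_imp_le f
  obtain ⟨x, y, hxy, hxf, hyf, hfx⟩ := Rat.exists_fareyDet_eq_one_of_sub_lt f (sub_pos.mpr hcf)
  refine ⟨x, y, Rat.lt_of_fareyDet_eq_one hxy, Rat.lt_of_fareyDet_eq_one hyf,
    by rw [← Rat.fareyDet, hxy, abs_one], by rw [← Rat.fareyDet, hxf, abs_one],
    by rw [← Rat.fareyDet, hyf, abs_one], ?_⟩
  rintro q hq ⟨hxq, hqf⟩
  linarith [hc q hq hqf]

/-- Given a finite set `M` of rationals and `f ∈ M`, there are rationals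
`x < y < f` forming a Farey-1 triple with `f` (writing each rational in lowest terms with
positive denominator, each pair `p, q` satisfies `|p.den * q.num - p.num * q.den| = 1`),
such that no `q ∈ M` satisfies `x ≤ q < f`. -/
theorem stmt_6 (M : Finset ℚ) (f : ℚ) (hf : f ∈ M) :
    ∃ x y : ℚ, x < y ∧ y < f ∧
      |(x.den : ℤ) * y.num - x.num * (y.den : ℤ)| = 1 ∧
      |(x.den : ℤ) * f.num - x.num * (f.den : ℤ)| = 1 ∧
      |(y.den : ℤ) * f.num - y.num * (f.den : ℤ)| = 1 ∧
      ∀ q ∈ M, ¬(x ≤ q ∧ q < f) :=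
  stmt_6_general M f
end

section
/- Every element of G is either a point reflection r_p : x ↦ 2p − x for some p ∈ ℤ², or a translation x ↦ x + 2q for some q ∈ ℤ²; and conversely, every point reflection r_p with p ∈ ℤ² and every translation x ↦ x + 2q with q ∈ ℤ² belongs to G. -/
/-- The point reflection `x ↦ 2p - x` of the plane `ℝ²` about an integer point `p`. -/
noncomputable def ptRefl (p : ℤ × ℤ) : Equiv.Perm (ℝ × ℝ) :=
  Equiv.pointReflection ((p.1 : ℝ), (p.2 : ℝ))

/-- The translation `x ↦ x + 2q` of the plane `ℝ²` by an even integer vector `2q`. -/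
noncomputable def evenTransl (q : ℤ × ℤ) : Equiv.Perm (ℝ × ℝ) :=
  Equiv.addRight ((2 * q.1 : ℤ), (2 * q.2 : ℤ))

/-- The subgroup `G` of the group of bijections of `ℝ²` generated by the point
reflections about integer points. -/
noncomputable def Ggrp : Subgroup (Equiv.Perm (ℝ × ℝ)) :=
  Subgroup.closure (Set.range ptRefl)

/-!
Since `r_a ∘ r_b` is the translation by `2(a - b)`, and a point reflection composed on either side
with a translation by `2v` is the point reflection about `a ∓ v`, the point reflections about
lattice points together with the translations by twice a lattice vector already form a group.
It is generated by the reflections because `x ↦ x + 2q` is `r_q ∘ r_0`.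
-/

open Equiv

section PointReflection

variable {V : Type*} [AddCommGroup V]

lemma Equiv.pointReflection_mul_pointReflection (a b : V) :
    pointReflection a * pointReflection b = Equiv.addRight (a - b + (a - b)) := by
  ext x
  simp only [Perm.mul_apply, pointReflection_apply, vsub_eq_sub, vadd_eq_add, coe_addRight]
  abel

lemma Equiv.pointReflection_mul_addRight_add_self (a v : V) :
    pointReflection a * Equiv.addRight (v + v) = pointReflection (a - v) := by
  ext x
  simp only [Perm.mul_apply, pointReflection_apply, vsub_eq_sub, vadd_eq_add, coe_addRight]
  abel

lemma Equiv.addRight_add_self_mul_pointReflection (v a : V) :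
    Equiv.addRight (v + v) * pointReflection a = pointReflection (a + v) := by
  ext x
  simp only [Perm.mul_apply, pointReflection_apply, vsub_eq_sub, vadd_eq_add, coe_addRight]
  abel

lemma Equiv.inv_pointReflection (a : V) : (pointReflection a)⁻¹ = pointReflection a :=
  pointReflection_symm a

variable {W : Type*} [AddCommGroup W]

def reflTranslSubgroup (ι : W →+ V) : Subgroup (Perm V) where
  carrier := {g | (∃ p, g = pointReflection (ι p)) ∨ ∃ q, g = Equiv.addRight (ι q + ι q)}
  one_mem' := Or.inr ⟨0, by simp⟩
  mul_mem' := by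
    rintro _ _ (⟨p, rfl⟩ | ⟨q, rfl⟩) (⟨p', rfl⟩ | ⟨q', rfl⟩)
    · exact Or.inr ⟨p - p', by rw [pointReflection_mul_pointReflection, map_sub]⟩
    · exact Or.inl ⟨p - q', by rw [pointReflection_mul_addRight_add_self, map_sub]⟩
    · exact Or.inl ⟨p' + q, by rw [addRight_add_self_mul_pointReflection, map_add]⟩
    · exact Or.inr ⟨q' + q, by rw [← addRight_add, map_add, add_add_add_comm]⟩
  inv_mem' := by
    rintro _ (⟨p, rfl⟩ | ⟨q, rfl⟩)
    · exact Or.inl ⟨p, inv_pointReflection _⟩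
    · exact Or.inr ⟨-q, by rw [neg_addRight, map_neg, neg_add]⟩

lemma mem_reflTranslSubgroup {ι : W →+ V} {g : Perm V} :
    g ∈ reflTranslSubgroup ι ↔
      (∃ p, g = pointReflection (ι p)) ∨ ∃ q, g = Equiv.addRight (ι q + ι q) :=
  Iff.rfl

theorem closure_range_pointReflection_comp (ι : W →+ V) :
    Subgroup.closure (Set.range (pointReflection ∘ ι)) = reflTranslSubgroup ι := by
  refine le_antisymm
    (Subgroup.closure_le _ |>.2 <| Set.range_subset_iff.2 fun p ↦ .inl ⟨p, rfl⟩) ?_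
  rintro _ (⟨p, rfl⟩ | ⟨q, rfl⟩)
  · exact Subgroup.subset_closure ⟨p, rfl⟩
  · have h : Equiv.addRight (ι q + ι q) = pointReflection (ι q) * pointReflection (ι 0) := by
      rw [pointReflection_mul_pointReflection, map_zero, sub_zero]
    rw [h]
    exact mul_mem (Subgroup.subset_closure ⟨q, rfl⟩) (Subgroup.subset_closure ⟨0, rfl⟩)

end PointReflection

noncomputable def intPoint : ℤ × ℤ →+ ℝ × ℝ :=
  (Int.castAddHom ℝ).prodMap (Int.castAddHom ℝ)

lemma ptRefl_eq (p : ℤ × ℤ) : ptRefl p = pointReflection (intPoint p) := rfl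

lemma evenTransl_eq (q : ℤ × ℤ) : evenTransl q = Equiv.addRight (intPoint q + intPoint q) := by
  rw [evenTransl]
  congr 1
  ext <;> simp [intPoint, two_mul]

/-- An element of the group of bijections of `ℝ²` lies in `G` if and only if
it is a point reflection about an integer point or a translation by an even integer
vector. -/
theorem stmt_7 (g : Equiv.Perm (ℝ × ℝ)) :
    g ∈ Ggrp ↔ (∃ p : ℤ × ℤ, g = ptRefl p) ∨ (∃ q : ℤ × ℤ, g = evenTransl q) := by
  have hG : Ggrp = reflTranslSubgroup intPoint := closure_range_pointReflection_comp intPoint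
  simp only [hG, mem_reflTranslSubgroup, ptRefl_eq, evenTransl_eq]
end

section
/- The set H of elements of G that are translations equals {x ↦ x + 2q : q ∈ ℤ²}, and H is a normal subgroup of G of index 2. -/
@[simp]
lemma ptRefl_apply (p : ℤ × ℤ) (x : ℝ × ℝ) :
    ptRefl p x = (2 * p.1 - x.1, 2 * p.2 - x.2) := by
  ext <;> simp [ptRefl, Equiv.pointReflection_apply, vsub_eq_sub, vadd_eq_add] <;> ring

@[simp]
lemma evenTransl_apply (q : ℤ × ℤ) (x : ℝ × ℝ) :
    evenTransl q x = x + (2 * (q.1 : ℝ), 2 * (q.2 : ℝ)) := by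
  simp [evenTransl]

lemma evenTransl_zero : evenTransl 0 = 1 := by
  ext x <;> simp

lemma evenTransl_add (q q' : ℤ × ℤ) : evenTransl (q + q') = evenTransl q * evenTransl q' := by
  ext x <;> simp <;> ring

lemma evenTransl_neg (q : ℤ × ℤ) : evenTransl (-q) = (evenTransl q)⁻¹ :=
  (inv_eq_of_mul_eq_one_right (by rw [← evenTransl_add, add_neg_cancel, evenTransl_zero])).symm

lemma ptRefl_mul_ptRefl (p q : ℤ × ℤ) : ptRefl p * ptRefl q = evenTransl (p - q) := by
  ext x <;> simp <;> ring

lemma ptRefl_mul_evenTransl (p q : ℤ × ℤ) : ptRefl p * evenTransl q = ptRefl (p - q) := by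
  ext x <;> simp <;> ring

lemma ptRefl_inv (p : ℤ × ℤ) : (ptRefl p)⁻¹ = ptRefl p :=
  inv_eq_of_mul_eq_one_right (by rw [ptRefl_mul_ptRefl, sub_self, evenTransl_zero])

lemma ptRefl_not_translation (p : ℤ × ℤ) (v : ℝ × ℝ) : ¬ ∀ x, ptRefl p x = x + v := by
  intro h
  have h₀ := congrArg Prod.fst (h (0, 0))
  have h₁ := congrArg Prod.fst (h (1, 0))
  simp only [ptRefl_apply, Prod.fst_add] at h₀ h₁
  linarith

lemma ptRefl_ne_evenTransl (p q : ℤ × ℤ) : ptRefl p ≠ evenTransl q := fun h =>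
  ptRefl_not_translation p _ (h ▸ evenTransl_apply q)

noncomputable def evenTranslSubgroup : Subgroup (Equiv.Perm (ℝ × ℝ)) where
  carrier := Set.range evenTransl
  one_mem' := ⟨0, evenTransl_zero⟩
  mul_mem' := by
    rintro _ _ ⟨q, rfl⟩ ⟨q', rfl⟩
    exact ⟨q + q', evenTransl_add q q'⟩
  inv_mem' := by
    rintro _ ⟨q, rfl⟩
    exact ⟨-q, evenTransl_neg q⟩

lemma coe_evenTranslSubgroup : (evenTranslSubgroup : Set (Equiv.Perm (ℝ × ℝ))) =
    Set.range evenTransl := rfl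

lemma ptRefl_mem_Ggrp (p : ℤ × ℤ) : ptRefl p ∈ Ggrp :=
  Subgroup.subset_closure ⟨p, rfl⟩

lemma evenTransl_mem_Ggrp (q : ℤ × ℤ) : evenTransl q ∈ Ggrp := by
  rw [← sub_zero q, ← ptRefl_mul_ptRefl]
  exact mul_mem (ptRefl_mem_Ggrp q) (ptRefl_mem_Ggrp 0)

lemma ptRefl_mul_mem_range {p : ℤ × ℤ} {g : Equiv.Perm (ℝ × ℝ)}
    (hg : g ∈ Set.range evenTransl ∪ Set.range ptRefl) :
    ptRefl p * g ∈ Set.range evenTransl ∪ Set.range ptRefl := by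
  rcases hg with ⟨q, rfl⟩ | ⟨p', rfl⟩
  · exact Or.inr ⟨p - q, (ptRefl_mul_evenTransl p q).symm⟩
  · exact Or.inl ⟨p - p', (ptRefl_mul_ptRefl p p').symm⟩

lemma mem_Ggrp_iff {g : Equiv.Perm (ℝ × ℝ)} :
    g ∈ Ggrp ↔ g ∈ Set.range evenTransl ∪ Set.range ptRefl := by
  refine ⟨fun hg => ?_, ?_⟩
  · induction hg using Subgroup.closure_induction_left with
    | one => exact Or.inl ⟨0, evenTransl_zero⟩
    | mul_left _ hx _ _ ih =>
      obtain ⟨p, rfl⟩ := hx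
      exact ptRefl_mul_mem_range ih
    | inv_mul_cancel _ hx _ _ ih =>
      obtain ⟨p, rfl⟩ := hx
      exact ptRefl_inv p ▸ ptRefl_mul_mem_range ih
  · rintro (⟨q, rfl⟩ | ⟨p, rfl⟩)
    exacts [evenTransl_mem_Ggrp q, ptRefl_mem_Ggrp p]

lemma Ggrp_translations_eq_range_evenTransl :
    {g : Equiv.Perm (ℝ × ℝ) | g ∈ Ggrp ∧ ∃ v : ℝ × ℝ, ∀ x, g x = x + v} =
      Set.range evenTransl := by
  ext g
  refine ⟨fun ⟨hg, v, hv⟩ => ?_, ?_⟩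
  · rcases mem_Ggrp_iff.1 hg with hq | ⟨p, rfl⟩
    · exact hq
    · exact absurd hv (ptRefl_not_translation p v)
  · rintro ⟨q, rfl⟩
    exact ⟨evenTransl_mem_Ggrp q, _, evenTransl_apply q⟩

lemma relIndex_evenTranslSubgroup_Ggrp : evenTranslSubgroup.relIndex Ggrp = 2 := by
  refine Subgroup.relIndex_eq_two_iff_exists_notMem_and.2
    ⟨ptRefl 0, ptRefl_mem_Ggrp 0, fun ⟨q, hq⟩ => ptRefl_ne_evenTransl 0 q hq.symm, ?_⟩
  intro g hg
  rcases mem_Ggrp_iff.1 hg with ⟨q, rfl⟩ | ⟨p, rfl⟩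
  · exact Or.inr ⟨q, rfl⟩
  · exact Or.inl ⟨p, by rw [ptRefl_mul_ptRefl, sub_zero]⟩

/-- The set `H` of elements of `G` that are translations equals the set of
translations by even integer vectors, and `H` is a normal subgroup of `G` of index 2. -/
theorem stmt_8 :
    ({g : Equiv.Perm (ℝ × ℝ) | g ∈ Ggrp ∧ ∃ v : ℝ × ℝ, ∀ x, g x = x + v} =
      Set.range evenTransl) ∧
    ∃ H : Subgroup (Equiv.Perm (ℝ × ℝ)),
      (H : Set (Equiv.Perm (ℝ × ℝ))) =
          {g : Equiv.Perm (ℝ × ℝ) | g ∈ Ggrp ∧ ∃ v : ℝ × ℝ, ∀ x, g x = x + v} ∧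
      (H.subgroupOf Ggrp).Normal ∧ (H.subgroupOf Ggrp).index = 2 :=
  ⟨Ggrp_translations_eq_range_evenTransl, evenTranslSubgroup,
    by rw [Ggrp_translations_eq_range_evenTransl, coe_evenTranslSubgroup],
    Subgroup.normal_of_index_eq_two relIndex_evenTranslSubgroup_Ggrp,
    relIndex_evenTranslSubgroup_Ggrp⟩
end

section
/- Let P = {x ∈ ℤ^6 : x1 + x2 + x3 = 0, x1 = x4, x2 = x5, x3 = x6}. Then the set {σ·v4(a,b) : σ ∈ Z, a and b integers with a ≥ 0, b ≥ 1, gcd(a,b) = 1} equals the set of all x ∈ P whose six entries have greatest common divisor 1. -/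
/-- The vector `v4(a,b) = (−b, a, b−a, −b, a, b−a) ∈ ℤ^6`. -/
def v4 (a b : ℤ) : Fin 6 → ℤ := ![-b, a, b - a, -b, a, b - a]

/-- The permutation `(123)(456)` of `{1,…,6}`, on 0-indexed `Fin 6`:
`0 ↦ 1 ↦ 2 ↦ 0` and `3 ↦ 4 ↦ 5 ↦ 3`. -/
def zgen : Equiv.Perm (Fin 6) :=
  Equiv.swap 0 1 * Equiv.swap 1 2 * (Equiv.swap 3 4 * Equiv.swap 4 5)

/-- The cyclic group `Z = ⟨(123)(456)⟩`. -/
def Zgrp : Subgroup (Equiv.Perm (Fin 6)) := Subgroup.closure {zgen}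

/-- A permutation `σ` acts on `ℤ^6` by permuting coordinates: the `σ(i)`-th entry of
`σ·x` is the `i`-th entry of `x`; equivalently `(σ·x) j = x (σ⁻¹ j)`. -/
def permAct (σ : Equiv.Perm (Fin 6)) (x : Fin 6 → ℤ) : Fin 6 → ℤ :=
  fun j => x (σ⁻¹ j)

/-!
Every point of the plane `P` has the form `(p, q, r, p, q, r)` with `r = -p - q`; the gcd of its
entries is `gcd(p, q)`, and the generator of `Z` rotates `(p, q, r)` to `(r, p, q)`. Since
`v4(a, b)` is the point with `(p, q) = (-b, a)`, the orbit consists of primitive points of `P`.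
Conversely a primitive point has `(p, q, r) ≠ 0`, so cyclically some negative entry is followed
by a nonnegative one; rotating that pair to the front writes the point as `σ·v4(a, b)`, where
`b ≥ 1` is minus the negative entry and `a ≥ 0` is the next one.
-/

def planeVec (p q : ℤ) : Fin 6 → ℤ := ![p, q, -p - q, p, q, -p - q]

lemma v4_eq_planeVec (a b : ℤ) : v4 a b = planeVec (-b) a := by
  funext i; fin_cases i <;> simp [v4, planeVec]

lemma eq_planeVec_iff (x : Fin 6 → ℤ) :
    (x 0 + x 1 + x 2 = 0 ∧ x 0 = x 3 ∧ x 1 = x 4 ∧ x 2 = x 5) ↔ ∃ p q, x = planeVec p q := by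
  constructor
  · rintro ⟨hsum, h03, h14, h25⟩
    refine ⟨x 0, x 1, funext fun i => ?_⟩
    fin_cases i <;> simp [planeVec] <;> omega
  · rintro ⟨p, q, rfl⟩
    simp [planeVec]

lemma permAct_mul (σ τ : Equiv.Perm (Fin 6)) (x : Fin 6 → ℤ) :
    permAct (σ * τ) x = permAct σ (permAct τ x) := rfl

lemma permAct_zgen_planeVec (p q : ℤ) : permAct zgen (planeVec p q) = planeVec (-p - q) p := by
  funext i; fin_cases i <;> first | rfl | exact (show q = -(-p - q) - p by ring)

lemma gcd_permAct (σ : Equiv.Perm (Fin 6)) (x : Fin 6 → ℤ) :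
    Finset.univ.gcd (permAct σ x) = Finset.univ.gcd x := by
  classical
  change Finset.univ.gcd (x ∘ σ.symm) = _
  rw [← Finset.gcd_image, Finset.image_univ_equiv]

lemma dvd_gcd_planeVec_iff {d p q : ℤ} :
    d ∣ Finset.univ.gcd (planeVec p q) ↔ d ∣ p ∧ d ∣ q := by
  simp +contextual [Finset.dvd_gcd_iff, Fin.forall_fin_succ, planeVec, dvd_sub, dvd_neg]

lemma gcd_planeVec (p q : ℤ) : Finset.univ.gcd (planeVec p q) = Int.gcd p q := by
  refine dvd_antisymm_of_normalize_eq Finset.normalize_gcd (Int.normalize_coe_nat _) ?_ ?_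
  · obtain ⟨hp, hq⟩ := dvd_gcd_planeVec_iff.mp dvd_rfl
    exact Int.dvd_coe_gcd hp hq
  · exact dvd_gcd_planeVec_iff.mpr ⟨Int.gcd_dvd_left p q, Int.gcd_dvd_right p q⟩

lemma gcd_neg_sub_left (p q : ℤ) : Int.gcd (-p - q) p = Int.gcd p q := by
  have h := gcd_permAct zgen (planeVec p q)
  rwa [permAct_zgen_planeVec, gcd_planeVec, gcd_planeVec, Nat.cast_inj] at h

lemma exists_pow_eq_of_mem_Zgrp {σ : Equiv.Perm (Fin 6)} (hσ : σ ∈ Zgrp) :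
    ∃ k : ℕ, zgen ^ k = σ :=
  mem_powers_iff_mem_zpowers.mpr (by rwa [Subgroup.zpowers_eq_closure])

lemma exists_permAct_zgen_pow_planeVec (k : ℕ) (p q : ℤ) :
    ∃ p' q', permAct (zgen ^ k) (planeVec p q) = planeVec p' q' := by
  induction k with
  | zero => exact ⟨p, q, rfl⟩
  | succ k ih =>
    obtain ⟨p', q', h⟩ := ih
    exact ⟨-p' - q', p', by rw [pow_succ', permAct_mul, h, permAct_zgen_planeVec]⟩

def v4Orbit : Set (Fin 6 → ℤ) :=
  {y | ∃ σ ∈ Zgrp, ∃ a b : ℤ, 0 ≤ a ∧ 1 ≤ b ∧ Int.gcd a b = 1 ∧ y = permAct σ (v4 a b)}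

lemma permAct_zgen_mem_v4Orbit {x : Fin 6 → ℤ} (hx : x ∈ v4Orbit) :
    permAct zgen x ∈ v4Orbit := by
  obtain ⟨σ, hσ, a, b, ha, hb, hab, rfl⟩ := hx
  exact ⟨zgen * σ, mul_mem (Subgroup.subset_closure rfl) hσ, a, b, ha, hb, hab, rfl⟩

lemma planeVec_mem_v4Orbit_of_neg_of_nonneg {p q : ℤ} (hp : p < 0) (hq : 0 ≤ q)
    (hpq : Int.gcd p q = 1) : planeVec p q ∈ v4Orbit :=
  ⟨1, one_mem _, q, -p, hq, by omega, by rwa [Int.gcd_neg, Int.gcd_comm],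
    by rw [v4_eq_planeVec, neg_neg]; rfl⟩

lemma planeVec_mem_v4Orbit {p q : ℤ} (hpq : Int.gcd p q = 1) : planeVec p q ∈ v4Orbit := by
  have hqr : Int.gcd q (-p - q) = 1 := by
    rwa [← gcd_neg_sub_left, show -q - (-p - q) = p by ring]
  have hrp : Int.gcd (-p - q) p = 1 := by rwa [gcd_neg_sub_left]
  have hne : ¬(p = 0 ∧ q = 0) := by
    rintro ⟨rfl, rfl⟩
    simp at hpq
  rcases (by omega : (p < 0 ∧ 0 ≤ q) ∨ (q < 0 ∧ 0 ≤ -p - q) ∨ (-p - q < 0 ∧ 0 ≤ p))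
    with ⟨hp, hq⟩ | ⟨hq, hr⟩ | ⟨hr, hp⟩
  · exact planeVec_mem_v4Orbit_of_neg_of_nonneg hp hq hpq
  · have h := permAct_zgen_mem_v4Orbit (planeVec_mem_v4Orbit_of_neg_of_nonneg hq hr hqr)
    rwa [permAct_zgen_planeVec, show -q - (-p - q) = p by ring] at h
  · have h := permAct_zgen_mem_v4Orbit <| permAct_zgen_mem_v4Orbit
      (planeVec_mem_v4Orbit_of_neg_of_nonneg hr hp hrp)
    rwa [permAct_zgen_planeVec, permAct_zgen_planeVec, show -(-p - q) - p = q by ring,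
      show -q - (-p - q) = p by ring] at h

/-- the orbit of the vectors `v4(a,b)` (with `a ≥ 0`, `b ≥ 1`,
`gcd(a,b) = 1`) under `Z` equals the set of integer vectors in the plane
`x₁+x₂+x₃ = 0, x₁ = x₄, x₂ = x₅, x₃ = x₆` whose six entries have gcd 1. -/
theorem stmt_13 :
    {y : Fin 6 → ℤ | ∃ σ ∈ Zgrp, ∃ a b : ℤ,
        0 ≤ a ∧ 1 ≤ b ∧ Int.gcd a b = 1 ∧ y = permAct σ (v4 a b)} =
    {x : Fin 6 → ℤ | (x 0 + x 1 + x 2 = 0 ∧ x 0 = x 3 ∧ x 1 = x 4 ∧ x 2 = x 5) ∧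
        Finset.univ.gcd x = 1} := by
  ext y
  simp only [Set.mem_ofPred_eq, eq_planeVec_iff]
  constructor
  · rintro ⟨σ, hσ, a, b, -, -, hab, rfl⟩
    obtain ⟨k, rfl⟩ := exists_pow_eq_of_mem_Zgrp hσ
    obtain ⟨p, q, h⟩ := exists_permAct_zgen_pow_planeVec k (-b) a
    rw [v4_eq_planeVec, gcd_permAct, gcd_planeVec, Int.neg_gcd, Int.gcd_comm, hab]
    exact ⟨⟨p, q, h⟩, rfl⟩
  · rintro ⟨⟨p, q, rfl⟩, hgcd⟩
    rw [gcd_planeVec, Nat.cast_eq_one] at hgcd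
    exact planeVec_mem_v4Orbit hgcd
end

section
/- The map (a, b, σ) ↦ σ·v4(a,b), defined for σ ∈ Z and integers a, b with a ≥ 0, b ≥ 1 and gcd(a,b) = 1, is injective: if σ·v4(a,b) = σ'·v4(a',b') for two such triples, then σ = σ', a = a' and b = b'. -/
lemma permAct_one (x : Fin 6 → ℤ) : permAct 1 x = x := rfl

lemma permAct_eq_permAct_iff (σ σ' : Equiv.Perm (Fin 6)) (x y : Fin 6 → ℤ) :
    permAct σ x = permAct σ' y ↔ x = permAct (σ⁻¹ * σ') y := by
  constructor
  · intro h
    rw [permAct_mul, ← h, ← permAct_mul, inv_mul_cancel, permAct_one]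
  · rintro rfl
    rw [← permAct_mul, mul_inv_cancel_left]

lemma orderOf_zgen : orderOf zgen = 3 :=
  orderOf_eq_prime (by decide) (by decide)

lemma eq_one_or_eq_zgen_or_eq_zgen_inv_of_mem_Zgrp {τ : Equiv.Perm (Fin 6)} (hτ : τ ∈ Zgrp) :
    τ = 1 ∨ τ = zgen ∨ τ = zgen⁻¹ := by
  rw [Zgrp, ← Subgroup.zpowers_eq_closure, mem_zpowers_iff_mem_range_orderOf, orderOf_zgen] at hτ
  obtain ⟨k, hk, rfl⟩ : ∃ k < 3, zgen ^ k = τ := by simpa using hτ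
  have hsq : zgen ^ 2 = zgen⁻¹ := by decide
  interval_cases k <;> simp [hsq]

/-- A nontrivial rotation would match the negative entry `-b` or `-b'` with a nonnegative
entry `a'` or `a`. -/
lemma eq_of_v4_eq_permAct_v4 {τ : Equiv.Perm (Fin 6)} (hτ : τ ∈ Zgrp) {a b a' b' : ℤ}
    (ha : 0 ≤ a) (hb : 1 ≤ b) (ha' : 0 ≤ a') (hb' : 1 ≤ b')
    (h : v4 a b = permAct τ (v4 a' b')) : τ = 1 ∧ a = a' ∧ b = b' := by
  have h0 := congrFun h 0
  have h1 := congrFun h 1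
  rcases eq_one_or_eq_zgen_or_eq_zgen_inv_of_mem_Zgrp hτ with rfl | rfl | rfl
  · have : -b = -b' := h0
    exact ⟨rfl, h1, by omega⟩
  · have : a = -b' := h1
    omega
  · have : -b = a' := h0
    omega

theorem stmt_14_general (σ σ' : Equiv.Perm (Fin 6)) (hσ : σ ∈ Zgrp) (hσ' : σ' ∈ Zgrp)
    (a b a' b' : ℤ) (ha : 0 ≤ a) (hb : 1 ≤ b)
    (ha' : 0 ≤ a') (hb' : 1 ≤ b')
    (heq : permAct σ (v4 a b) = permAct σ' (v4 a' b')) :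
    σ = σ' ∧ a = a' ∧ b = b' := by
  rw [permAct_eq_permAct_iff] at heq
  obtain ⟨hτ, rfl, rfl⟩ :=
    eq_of_v4_eq_permAct_v4 (Subgroup.mul_mem _ (Subgroup.inv_mem _ hσ) hσ') ha hb ha' hb' heq
  exact ⟨inv_mul_eq_one.mp hτ, rfl, rfl⟩

/-- the map `(a, b, σ) ↦ σ·v4(a,b)` on triples with `σ ∈ Z`, `a ≥ 0`,
`b ≥ 1`, `gcd(a,b) = 1` is injective. -/
theorem stmt_14 (σ σ' : Equiv.Perm (Fin 6)) (hσ : σ ∈ Zgrp) (hσ' : σ' ∈ Zgrp)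
    (a b a' b' : ℤ) (ha : 0 ≤ a) (hb : 1 ≤ b) (hab : Int.gcd a b = 1)
    (ha' : 0 ≤ a') (hb' : 1 ≤ b') (hab' : Int.gcd a' b' = 1)
    (heq : permAct σ (v4 a b) = permAct σ' (v4 a' b')) :
    σ = σ' ∧ a = a' ∧ b = b' :=
  stmt_14_general σ σ' hσ hσ' a b a' b' ha hb ha' hb' heq
end

section
/- The following two subsets of ℤ^6 are equal. The first set consists of all σ·v_i(a,b) where σ ranges over the group W, i ranges over {1,2,3,4}, and (a,b) ranges over pairs of integers with a ≥ 0, b ≥ 1, gcd(a,b) = 1. The second set is the union of: (i) all σ·v1(a,b) with σ ∈ Z·X and a ≥ 0, b ≥ 1, gcd(a,b) = 1; (ii) all σ·u2(a,b) with σ ∈ Z·X and a ≥ 1, b ≥ 0, gcd(a,b) = 1; (iii) all σ·v3(a,b) with σ ∈ Z·Y and a ≥ 0, b ≥ 1, gcd(a,b) = 1; (iv) all σ·v4(a,b) with σ ∈ Z and a ≥ 0, b ≥ 1, gcd(a,b) = 1. -/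
open scoped Pointwise

/-- `v1(a,b) = (−⌊(b−1)/2⌋, ⌊a/2⌋+1, ⌊(b−a)/2⌋, −⌊b/2⌋, ⌊(a+1)/2⌋, ⌊(b−a−1)/2⌋)`.
(Note: `(· / 2)` on `ℤ` rounds down since the divisor is positive.) -/
def v1 (a b : ℤ) : Fin 6 → ℤ :=
  ![-((b - 1) / 2), a / 2 + 1, (b - a) / 2, -(b / 2), (a + 1) / 2, (b - a - 1) / 2]

/-- `v2(a,b) = (−⌊a/2⌋−1, ⌊(b−1)/2⌋, ⌊(a−b+1)/2⌋, −⌊(a+1)/2⌋, ⌊b/2⌋, ⌊(a−b)/2⌋+1)`. -/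
def v2 (a b : ℤ) : Fin 6 → ℤ :=
  ![-(a / 2) - 1, (b - 1) / 2, (a - b + 1) / 2, -((a + 1) / 2), b / 2, (a - b) / 2 + 1]

/-- `v3(a,b) = (−⌊b/2⌋, ⌊(a+1)/2⌋, ⌊(b−a+1)/2⌋, −⌊(b+1)/2⌋, ⌊a/2⌋, ⌊(b−a)/2⌋)`. -/
def v3 (a b : ℤ) : Fin 6 → ℤ :=
  ![-(b / 2), (a + 1) / 2, (b - a + 1) / 2, -((b + 1) / 2), a / 2, (b - a) / 2]

/-- `u2(a,b) = (−⌊b/2⌋−1, ⌊(a−1)/2⌋, ⌊(b−a+1)/2⌋, −⌊(b+1)/2⌋, ⌊a/2⌋, ⌊(b−a)/2⌋+1)`. -/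
def u2 (a b : ℤ) : Fin 6 → ℤ :=
  ![-(b / 2) - 1, (a - 1) / 2, (b - a + 1) / 2, -((b + 1) / 2), a / 2, (b - a) / 2 + 1]

/-- The cyclic group `X = ⟨(14)(25)(36)⟩`. -/
def Xgrp : Subgroup (Equiv.Perm (Fin 6)) :=
  Subgroup.closure {Equiv.swap 0 3 * Equiv.swap 1 4 * Equiv.swap 2 5}

/-- The group `Y = ⟨(14)(36), (25)(36)⟩`. -/
def Ygrp : Subgroup (Equiv.Perm (Fin 6)) :=
  Subgroup.closure {Equiv.swap 0 3 * Equiv.swap 2 5, Equiv.swap 1 4 * Equiv.swap 2 5}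

/-- The group `W = ⟨(14), (25), (36), (123)(456)⟩`. -/
def Wgrp : Subgroup (Equiv.Perm (Fin 6)) :=
  Subgroup.closure {Equiv.swap 0 3, Equiv.swap 1 4, Equiv.swap 2 5, zgen}

/-!
Every element of `W` is `ζ * τ` with `ζ ∈ Z` and `τ` in the group `T = ⟨(14), (25), (36)⟩` of
pair swaps, which `Z` normalizes. Since `gcd(a, b) = 1`, `a` and `b` are not both even, and the
parities decide which coordinate pairs `(i, i+3)` of `vᵢ(a, b)` agree. In `v1` and `u2` at least two
pairs agree, so each pair swap acts on them as `1` or as `(14)(25)(36)`; in `v3` some pair `(k, k+3)`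
agrees, so a pair swap `t` acts as `t * (k, k+3) ∈ Y`; `v4` is fixed by `T`. As `T` is abelian,
`T·v` is then `X·v`, `Y·v` or `{v}`, whence `W·v = Z·X·v`, `Z·Y·v` or `Z·v`. Finally
`v2(a, b) = u2(b, a)`.
-/

open Equiv Subgroup

-- With this action `σ • x` is `permAct σ x` by definition.
attribute [local instance] arrowAction

section GroupAction

variable {G α : Type*} [Group G] [MulAction G α]

theorem exists_smul_eq_of_mem_closure {S : Set G} {H : Subgroup G} (hH : H ≤ centralizer S)
    {x : α} (hx : ∀ s ∈ S, ∃ h ∈ H, s • x = h • x) {g : G} (hg : g ∈ closure S) :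
    ∃ h ∈ H, g • x = h • x := by
  induction hg using closure_induction_left with
  | one => exact ⟨1, one_mem _, rfl⟩
  | mul_left s hs g _ ih =>
    obtain ⟨h, hh, hgx⟩ := ih
    obtain ⟨h', hh', hsx⟩ := hx s hs
    have hsh : s * h = h * s := mem_centralizer_iff.mp (hH hh) s hs
    refine ⟨h * h', mul_mem hh hh', ?_⟩
    rw [mul_smul, hgx, ← mul_smul, hsh, mul_smul, hsx, mul_smul]
  | inv_mul_cancel s hs g _ ih =>
    obtain ⟨h, hh, hgx⟩ := ih
    obtain ⟨h', hh', hsx⟩ := hx s hs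
    have hsh : Commute s h := mem_centralizer_iff.mp (hH hh) s hs
    have hsh' : Commute s h' := mem_centralizer_iff.mp (hH hh') s hs
    have hsx' : s⁻¹ • x = h'⁻¹ • x := by
      rw [inv_smul_eq_iff, ← mul_smul, hsh'.inv_right.eq, mul_smul, hsx, inv_smul_smul]
    refine ⟨h * h'⁻¹, mul_mem hh (inv_mem hh'), ?_⟩
    rw [mul_smul, hgx, ← mul_smul, hsh.inv_left.eq, mul_smul, hsx', mul_smul]

theorem exists_mem_mul_smul_eq_of_mem_sup {S : Set G} {K H : Subgroup G}
    (hK : K ≤ normalizer (closure S : Set G)) (hH : H ≤ centralizer S) {x : α}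
    (hx : ∀ s ∈ S, ∃ h ∈ H, s • x = h • x) {g : G} (hg : g ∈ K ⊔ closure S) :
    ∃ g' ∈ (K : Set G) * H, g • x = g' • x := by
  rw [← SetLike.mem_coe, coe_mul_of_left_le_normalizer_right K _ hK] at hg
  obtain ⟨k, hk, t, ht, rfl⟩ := hg
  obtain ⟨h, hh, htx⟩ := exists_smul_eq_of_mem_closure hH hx ht
  exact ⟨k * h, Set.mul_mem_mul hk hh, by rw [mul_smul, htx, mul_smul]⟩

end GroupAction

section PermSMul

variable {ι β : Type*}

theorem perm_smul_apply (σ : Perm ι) (v : ι → β) (j : ι) : (σ • v) j = v (σ⁻¹ j) := rfl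

theorem swap_smul_eq_self [DecidableEq ι] {v : ι → β} {i j : ι} (h : v i = v j) : swap i j • v = v := by
  funext k
  rw [perm_smul_apply, swap_inv, swap_apply_def]
  split_ifs with hki hkj
  · rw [hki, h]
  · rw [hkj, h]
  · rfl

end PermSMul

def pairSwaps : Set (Perm (Fin 6)) := {swap 0 3, swap 1 4, swap 2 5}

theorem Wgrp_eq_sup : Wgrp = Zgrp ⊔ closure pairSwaps := by
  rw [Wgrp, Zgrp, pairSwaps, ← Subgroup.closure_union, Set.singleton_union]
  congr 1
  ext t
  simp only [Set.mem_insert_iff, Set.mem_singleton_iff]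
  tauto

theorem Zgrp_le_normalizer : Zgrp ≤ normalizer (closure pairSwaps : Set (Perm (Fin 6))) := by
  refine (closure_le _).mpr (Set.singleton_subset_iff.mpr (normalizer_le_normalizer_closure _ ?_))
  rw [mem_normalizer_iff_conj_image_eq]
  simp only [pairSwaps, Set.image_insert_eq, Set.image_singleton, MulAut.conj_apply]
  rw [show zgen * swap 0 3 * zgen⁻¹ = swap 1 4 by decide,
    show zgen * swap 1 4 * zgen⁻¹ = swap 2 5 by decide,
    show zgen * swap 2 5 * zgen⁻¹ = swap 0 3 by decide]
  ext t
  simp only [Set.mem_insert_iff, Set.mem_singleton_iff]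
  tauto

theorem closure_pairSwaps_le_centralizer : closure pairSwaps ≤ centralizer pairSwaps := by
  refine (closure_le _).mpr ?_
  rintro t (rfl | rfl | rfl) <;> rw [SetLike.mem_coe, mem_centralizer_iff] <;>
    rintro s (rfl | rfl | rfl) <;> decide

theorem Xgrp_le_closure_pairSwaps : Xgrp ≤ closure pairSwaps := by
  refine (closure_le _).mpr (Set.singleton_subset_iff.mpr ?_)
  exact mul_mem (mul_mem (subset_closure (by simp [pairSwaps]))
    (subset_closure (by simp [pairSwaps]))) (subset_closure (by simp [pairSwaps]))

theorem Ygrp_le_closure_pairSwaps : Ygrp ≤ closure pairSwaps := by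
  refine (closure_le _).mpr ?_
  rintro t (rfl | rfl) <;>
    exact mul_mem (subset_closure (by simp [pairSwaps])) (subset_closure (by simp [pairSwaps]))

theorem mul_mem_Ygrp_of_mem_pairSwaps {t s : Perm (Fin 6)} (ht : t ∈ pairSwaps) (hs : s ∈ pairSwaps) :
    t * s ∈ Ygrp := by
  have hA : swap 0 3 * swap 2 5 ∈ Ygrp := subset_closure (by simp)
  have hB : swap 1 4 * swap 2 5 ∈ Ygrp := subset_closure (by simp)
  have : t * s ∈ ({1, swap 0 3 * swap 2 5, swap 1 4 * swap 2 5,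
      swap 0 3 * swap 2 5 * (swap 1 4 * swap 2 5)} : Finset (Perm (Fin 6))) := by
    rcases ht with rfl | rfl | rfl <;> rcases hs with rfl | rfl | rfl <;> decide
  simp only [Finset.mem_insert, Finset.mem_singleton] at this
  rcases this with h | h | h | h <;> rw [h]
  exacts [one_mem _, hA, hB, mul_mem hA hB]

theorem exists_mem_Zgrp_mul_smul_eq {H : Subgroup (Perm (Fin 6))} (hH : H ≤ closure pairSwaps)
    {v : Fin 6 → ℤ} (hv : ∀ t ∈ pairSwaps, ∃ h ∈ H, t • v = h • v) {σ : Perm (Fin 6)}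
    (hσ : σ ∈ Wgrp) : ∃ σ' ∈ (Zgrp : Set (Perm (Fin 6))) * H, σ • v = σ' • v := by
  rw [Wgrp_eq_sup] at hσ
  exact exists_mem_mul_smul_eq_of_mem_sup Zgrp_le_normalizer
    (hH.trans closure_pairSwaps_le_centralizer) hv hσ

theorem mem_Wgrp_of_mem_Zgrp_mul {H : Subgroup (Perm (Fin 6))} (hH : H ≤ closure pairSwaps)
    {σ : Perm (Fin 6)} (hσ : σ ∈ (Zgrp : Set (Perm (Fin 6))) * H) : σ ∈ Wgrp := by
  obtain ⟨ζ, hζ, h, hh, rfl⟩ := hσ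
  rw [Wgrp_eq_sup]
  exact mul_mem (mem_sup_left hζ) (mem_sup_right (hH hh))

theorem exists_mem_Xgrp_smul_eq {v : Fin 6 → ℤ}
    (hv : (v 0 = v 3 ∧ v 1 = v 4) ∨ (v 0 = v 3 ∧ v 2 = v 5) ∨ (v 1 = v 4 ∧ v 2 = v 5)) :
    ∀ t ∈ pairSwaps, ∃ h ∈ Xgrp, t • v = h • v := by
  have key : ∀ t ∈ pairSwaps,
      t • v = v ∨ t • v = (swap 0 3 * swap 1 4 * swap 2 5 : Perm (Fin 6)) • v := by
    rintro t (rfl | rfl | rfl) <;>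
      simp [funext_iff, Fin.forall_fin_succ, perm_smul_apply, swap_apply_def] <;> omega
  intro t ht
  rcases key t ht with h | h
  · exact ⟨1, one_mem _, by rw [h, one_smul]⟩
  · exact ⟨_, mem_closure_singleton_self _, h⟩

theorem exists_mem_Ygrp_smul_eq {v : Fin 6 → ℤ} (hv : v 0 = v 3 ∨ v 1 = v 4 ∨ v 2 = v 5) :
    ∀ t ∈ pairSwaps, ∃ h ∈ Ygrp, t • v = h • v := by
  obtain ⟨s, hs, hsv⟩ : ∃ s ∈ pairSwaps, s • v = v := by
    rcases hv with h | h | h <;> exact ⟨_, by simp [pairSwaps], swap_smul_eq_self h⟩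
  exact fun t ht => ⟨t * s, mul_mem_Ygrp_of_mem_pairSwaps ht hs, by rw [mul_smul, hsv]⟩

theorem emod_two_eq_one_or_of_gcd_eq_one {a b : ℤ} (h : Int.gcd a b = 1) :
    a % 2 = 1 ∨ b % 2 = 1 := by
  by_contra! hab
  have ha : (2 : ℤ) ∣ a := by omega
  have hb : (2 : ℤ) ∣ b := by omega
  have h2 := Int.dvd_gcd ha hb
  rw [h] at h2
  norm_num at h2

theorem v1_pairs_eq {a b : ℤ} (h : Int.gcd a b = 1) :
    (v1 a b 0 = v1 a b 3 ∧ v1 a b 1 = v1 a b 4) ∨ (v1 a b 0 = v1 a b 3 ∧ v1 a b 2 = v1 a b 5) ∨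
      (v1 a b 1 = v1 a b 4 ∧ v1 a b 2 = v1 a b 5) := by
  have := emod_two_eq_one_or_of_gcd_eq_one h
  simp [v1]
  omega

theorem u2_pairs_eq {a b : ℤ} (h : Int.gcd a b = 1) :
    (u2 a b 0 = u2 a b 3 ∧ u2 a b 1 = u2 a b 4) ∨ (u2 a b 0 = u2 a b 3 ∧ u2 a b 2 = u2 a b 5) ∨
      (u2 a b 1 = u2 a b 4 ∧ u2 a b 2 = u2 a b 5) := by
  have := emod_two_eq_one_or_of_gcd_eq_one h
  simp [u2]
  omega

theorem v3_pairs_eq {a b : ℤ} (h : Int.gcd a b = 1) :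
    v3 a b 0 = v3 a b 3 ∨ v3 a b 1 = v3 a b 4 ∨ v3 a b 2 = v3 a b 5 := by
  have := emod_two_eq_one_or_of_gcd_eq_one h
  simp [v3]
  omega

theorem exists_mem_Zgrp_smul_v4_eq (a b : ℤ) {σ : Perm (Fin 6)} (hσ : σ ∈ Wgrp) :
    ∃ ζ ∈ Zgrp, σ • v4 a b = ζ • v4 a b := by
  have hv : ∀ t ∈ pairSwaps, ∃ h ∈ (⊥ : Subgroup (Perm (Fin 6))), t • v4 a b = h • v4 a b := by
    rintro t (rfl | rfl | rfl) <;> exact ⟨1, one_mem _, swap_smul_eq_self rfl⟩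
  obtain ⟨_, ⟨ζ, hζ, h, hh, rfl⟩, hσv⟩ := exists_mem_Zgrp_mul_smul_eq bot_le hv hσ
  obtain rfl := mem_bot.mp hh
  exact ⟨ζ, hζ, by simpa using hσv⟩

/-- the orbit of the vectors `v1, v2, v3, v4` (over `a ≥ 0`, `b ≥ 1`,
`gcd(a,b) = 1`) under the group `W` equals the union of: the `Z·X`-images of `v1(a,b)`
(`a ≥ 0`, `b ≥ 1`, coprime), the `Z·X`-images of `u2(a,b)` (`a ≥ 1`, `b ≥ 0`, coprime),
the `Z·Y`-images of `v3(a,b)` (`a ≥ 0`, `b ≥ 1`, coprime), and the `Z`-images of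
`v4(a,b)` (`a ≥ 0`, `b ≥ 1`, coprime). -/
theorem stmt_15 :
    {y : Fin 6 → ℤ | ∃ σ ∈ Wgrp, ∃ a b : ℤ, 0 ≤ a ∧ 1 ≤ b ∧ Int.gcd a b = 1 ∧
        (y = permAct σ (v1 a b) ∨ y = permAct σ (v2 a b) ∨
         y = permAct σ (v3 a b) ∨ y = permAct σ (v4 a b))} =
    {y : Fin 6 → ℤ |
        (∃ σ ∈ (Zgrp : Set (Equiv.Perm (Fin 6))) * (Xgrp : Set (Equiv.Perm (Fin 6))),
            ∃ a b : ℤ, 0 ≤ a ∧ 1 ≤ b ∧ Int.gcd a b = 1 ∧ y = permAct σ (v1 a b)) ∨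
        (∃ σ ∈ (Zgrp : Set (Equiv.Perm (Fin 6))) * (Xgrp : Set (Equiv.Perm (Fin 6))),
            ∃ a b : ℤ, 1 ≤ a ∧ 0 ≤ b ∧ Int.gcd a b = 1 ∧ y = permAct σ (u2 a b)) ∨
        (∃ σ ∈ (Zgrp : Set (Equiv.Perm (Fin 6))) * (Ygrp : Set (Equiv.Perm (Fin 6))),
            ∃ a b : ℤ, 0 ≤ a ∧ 1 ≤ b ∧ Int.gcd a b = 1 ∧ y = permAct σ (v3 a b)) ∨
        (∃ σ ∈ Zgrp, ∃ a b : ℤ, 0 ≤ a ∧ 1 ≤ b ∧ Int.gcd a b = 1 ∧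
            y = permAct σ (v4 a b))} := by
  ext y
  constructor
  · rintro ⟨σ, hσ, a, b, ha, hb, hab, rfl | rfl | rfl | rfl⟩
    · obtain ⟨σ', hσ', h⟩ := exists_mem_Zgrp_mul_smul_eq Xgrp_le_closure_pairSwaps
        (exists_mem_Xgrp_smul_eq (v1_pairs_eq hab)) hσ
      exact Or.inl ⟨σ', hσ', a, b, ha, hb, hab, h⟩
    · rw [Int.gcd_comm] at hab
      obtain ⟨σ', hσ', h⟩ := exists_mem_Zgrp_mul_smul_eq Xgrp_le_closure_pairSwaps
        (exists_mem_Xgrp_smul_eq (u2_pairs_eq hab)) hσ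
      exact Or.inr (Or.inl ⟨σ', hσ', b, a, hb, ha, hab, h⟩)
    · obtain ⟨σ', hσ', h⟩ := exists_mem_Zgrp_mul_smul_eq Ygrp_le_closure_pairSwaps
        (exists_mem_Ygrp_smul_eq (v3_pairs_eq hab)) hσ
      exact Or.inr (Or.inr (Or.inl ⟨σ', hσ', a, b, ha, hb, hab, h⟩))
    · obtain ⟨ζ, hζ, h⟩ := exists_mem_Zgrp_smul_v4_eq a b hσ
      exact Or.inr (Or.inr (Or.inr ⟨ζ, hζ, a, b, ha, hb, hab, h⟩))
  · rintro (⟨σ, hσ, a, b, ha, hb, hab, rfl⟩ | ⟨σ, hσ, a, b, ha, hb, hab, rfl⟩ |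
      ⟨σ, hσ, a, b, ha, hb, hab, rfl⟩ | ⟨σ, hσ, a, b, ha, hb, hab, rfl⟩)
    · exact ⟨σ, mem_Wgrp_of_mem_Zgrp_mul Xgrp_le_closure_pairSwaps hσ, a, b, ha, hb, hab,
        Or.inl rfl⟩
    · exact ⟨σ, mem_Wgrp_of_mem_Zgrp_mul Xgrp_le_closure_pairSwaps hσ, b, a, hb, ha,
        Int.gcd_comm a b ▸ hab, Or.inr (Or.inl rfl)⟩
    · exact ⟨σ, mem_Wgrp_of_mem_Zgrp_mul Ygrp_le_closure_pairSwaps hσ, a, b, ha, hb, hab,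
        Or.inr (Or.inr (Or.inl rfl))⟩
    · exact ⟨σ, Wgrp_eq_sup ▸ mem_sup_left hσ, a, b, ha, hb, hab, Or.inr (Or.inr (Or.inr rfl))⟩
end
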